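/- Let K be a field, let A, B, C be finite-dimensional K-vector spaces, let i : A → B be an injective linear map and j : A → C a linear map, and let P = B ⊔_A C be the pushout of i and j, with structure maps k : B → P and l : C → P. Suppose a : A → A, b : B → B, c : C → C are linear endomorphisms with b ∘ i = i ∘ a and c ∘ j = j ∘ a, and let p : P → P be the endomorphism induced on the pushout (the unique map with p ∘ k = k ∘ b and p ∘ l = l ∘ c). Then trace(p) = trace(b) + trace(c) − trace(a). -/

import Mathlib

/-!
Write `f = (i, -j) : A → B × C` and `g = k + l : B × C → P`, so that `0 → A → B × C → P → 0`
is exact and `b × c` restricts to `a` on `A` and induces `p` on `P`. Over a field the sequence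
splits, `id = f ∘ r + s ∘ g` with `r ∘ f = id` and `g ∘ s = id`, and cyclicity of the trace gives
`tr (b × c) = tr (r (b × c) f) + tr (g (b × c) s) = tr a + tr p`.
-/

open LinearMap

theorem LinearMap.trace_eq_add_of_splitting {R M N Q : Type*} [CommRing R]
    [AddCommGroup M] [Module R M] [Module.Free R M] [Module.Finite R M]
    [AddCommGroup N] [Module R N] [Module.Free R N] [Module.Finite R N]
    [AddCommGroup Q] [Module R Q] [Module.Free R Q] [Module.Finite R Q]
    {f : M →ₗ[R] N} {r : N →ₗ[R] M} {g : N →ₗ[R] Q} {s : Q →ₗ[R] N}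
    (hrf : r ∘ₗ f = id) (hgs : g ∘ₗ s = id) (hsplit : f ∘ₗ r + s ∘ₗ g = id)
    {α : M →ₗ[R] M} {φ : N →ₗ[R] N} {γ : Q →ₗ[R] Q}
    (hφf : φ ∘ₗ f = f ∘ₗ α) (hgφ : g ∘ₗ φ = γ ∘ₗ g) :
    trace R N φ = trace R M α + trace R Q γ :=
  calc trace R N φ = trace R N ((φ ∘ₗ f) ∘ₗ r) + trace R N ((φ ∘ₗ s) ∘ₗ g) := by
        rw [← map_add, comp_assoc, comp_assoc, ← comp_add, hsplit, comp_id]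
    _ = trace R M (r ∘ₗ φ ∘ₗ f) + trace R Q (g ∘ₗ φ ∘ₗ s) := by
        rw [trace_comp_comm' r, trace_comp_comm' g]
    _ = trace R M α + trace R Q γ := by
        rw [hφf, ← comp_assoc, hrf, id_comp, ← comp_assoc, hgφ, comp_assoc, hgs, comp_id]

theorem LinearMap.trace_eq_add_of_exact {K M N Q : Type*} [Field K]
    [AddCommGroup M] [Module K M] [AddCommGroup N] [Module K N] [FiniteDimensional K N]
    [AddCommGroup Q] [Module K Q]
    {f : M →ₗ[K] N} {g : N →ₗ[K] Q} (hfg : Function.Exact f g)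
    (hf : Function.Injective f) (hg : Function.Surjective g)
    {α : M →ₗ[K] M} {φ : N →ₗ[K] N} {γ : Q →ₗ[K] Q}
    (hφf : φ ∘ₗ f = f ∘ₗ α) (hgφ : g ∘ₗ φ = γ ∘ₗ g) :
    trace K N φ = trace K M α + trace K Q γ := by
  have : FiniteDimensional K M := .of_injective f hf
  have : FiniteDimensional K Q := .of_surjective g hg
  obtain ⟨r, hr⟩ := f.exists_leftInverse_of_injective (ker_eq_bot.mpr hf)
  obtain ⟨e, rfl, rfl⟩ := hfg.splitInjectiveEquiv hg ⟨r, hr⟩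
  refine trace_eq_add_of_splitting (r := fst K M Q ∘ₗ e) (s := e.symm ∘ₗ inr K M Q)
    ?_ ?_ ?_ hφf hgφ
  · ext; simp
  · ext; simp
  · ext x; simp [← map_add]

theorem trace_pushout_general
    (K : Type*) [Field K]
    (A B C P : Type*)
    [AddCommGroup A] [Module K A]
    [AddCommGroup B] [Module K B] [FiniteDimensional K B]
    [AddCommGroup C] [Module K C] [FiniteDimensional K C]
    [AddCommGroup P] [Module K P]
    (i : A →ₗ[K] B) (j : A →ₗ[K] C) (hi : Function.Injective i)
    (k : B →ₗ[K] P) (l : C →ₗ[K] P)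
    (hsurj : Function.Surjective (k.coprod l))
    (hker : LinearMap.ker (k.coprod l) = LinearMap.range (i.prod (-j)))
    (a : A →ₗ[K] A) (b : B →ₗ[K] B) (c : C →ₗ[K] C)
    (hb : b ∘ₗ i = i ∘ₗ a) (hc : c ∘ₗ j = j ∘ₗ a)
    (p : P →ₗ[K] P) (hpk : p ∘ₗ k = k ∘ₗ b) (hpl : p ∘ₗ l = l ∘ₗ c) :
    LinearMap.trace K P p =
      LinearMap.trace K B b + LinearMap.trace K C c - LinearMap.trace K A a := by
  have hexact : Function.Exact (i.prod (-j)) (k.coprod l) := exact_iff.mpr hker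
  have hinj : Function.Injective (i.prod (-j)) := fun x y h ↦ hi congr(($h).1)
  have hrestrict : b.prodMap c ∘ₗ i.prod (-j) = i.prod (-j) ∘ₗ a := by
    ext x
    · exact congr($hb x)
    · simpa using congr($hc x)
  have hinduce : k.coprod l ∘ₗ b.prodMap c = p ∘ₗ k.coprod l := by
    rw [comp_coprod, hpk, hpl]
    ext <;> simp
  have htrace := trace_eq_add_of_exact hexact hinj hsurj hrestrict hinduce
  rw [trace_prodMap'] at htrace
  linear_combination -htrace

/-- Inclusion-exclusion for traces on a pushout of finite-dimensional vector spaces.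
`P` is the pushout of `i : A → B` (injective) and `j : A → C`, presented as the
cokernel of `x ↦ (i x, -j x)`: the map `(x, y) ↦ k x + l y : B × C → P` is surjective
with kernel exactly the range of `x ↦ (i x, -j x)`.  If `a, b, c` are compatible
endomorphisms of `A, B, C` and `p` is the induced endomorphism of the pushout
(i.e. `p ∘ k = k ∘ b` and `p ∘ l = l ∘ c`), then `tr p = tr b + tr c - tr a`. -/
theorem trace_pushout
    (K : Type*) [Field K]
    (A B C P : Type*)
    [AddCommGroup A] [Module K A] [FiniteDimensional K A]
    [AddCommGroup B] [Module K B] [FiniteDimensional K B]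
    [AddCommGroup C] [Module K C] [FiniteDimensional K C]
    [AddCommGroup P] [Module K P] [FiniteDimensional K P]
    (i : A →ₗ[K] B) (j : A →ₗ[K] C) (hi : Function.Injective i)
    (k : B →ₗ[K] P) (l : C →ₗ[K] P)
    (hsurj : Function.Surjective (k.coprod l))
    (hker : LinearMap.ker (k.coprod l) = LinearMap.range (i.prod (-j)))
    (a : A →ₗ[K] A) (b : B →ₗ[K] B) (c : C →ₗ[K] C)
    (hb : b ∘ₗ i = i ∘ₗ a) (hc : c ∘ₗ j = j ∘ₗ a)
    (p : P →ₗ[K] P) (hpk : p ∘ₗ k = k ∘ₗ b) (hpl : p ∘ₗ l = l ∘ₗ c) :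
    LinearMap.trace K P p =
      LinearMap.trace K B b + LinearMap.trace K C c - LinearMap.trace K A a :=
  trace_pushout_general K A B C P i j hi k l hsurj hker a b c hb hc p hpk hpl
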